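/- Let A and B be m × n real matrices with unit ℓ₂-norm columns, and S ⊆ {1,…,n} with |S| = k ≤ m such that the eigenvalues of A_Sᵀ A_S and B_Sᵀ B_S lie in [1 − δ, 1 + δ], δ ∈ (0,1). Then (A_S ⊙ B_S)ᵀ(A_S ⊙ B_S) ≤ (1 + δ²) I_k in the Loewner order. -/

import Mathlib

open Matrix

/-- Columnwise Khatri-Rao product. -/
def khatriRao {m : ℕ} {ι : Type*} (A B : Matrix (Fin m) ι ℝ) :
    Matrix (Fin m × Fin m) ι ℝ :=
  fun p j => A p.1 j * B p.2 j

/-!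
Write `G = A_Sᵀ A_S` and `H = B_Sᵀ B_S`; the Gram matrix of `A_S ⊙ B_S` is the Hadamard product
`G ∘ H`. Both `G` and `H` have unit diagonal, so `((1 + δ) I - G) ∘ (H - (1 - δ) I)` coincides
with `(1 + δ²) I - G ∘ H`: on the diagonal both equal `δ²`, off it both equal `-G_ij H_ij`. The
spectral hypotheses make both factors positive semidefinite, and so is their Hadamard product by
the Schur product theorem.
-/

namespace Matrix

variable {ι : Type*}

theorem transpose_mul_self_apply_self {m R : Type*} [Fintype m] [CommSemiring R]
    (A : Matrix m ι R) (j : ι) : (Aᵀ * A) j j = ∑ i, A i j ^ 2 := by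
  simp only [mul_apply, transpose_apply, sq]

theorem isHermitian_transpose_mul_self {m : Type*} [Fintype m] (A : Matrix m ι ℝ) :
    (Aᵀ * A).IsHermitian := by
  simpa using isHermitian_conjTranspose_mul_self A

open scoped ComplexOrder in
theorem PosSemidef.smul_one_sub_hadamard [DecidableEq ι] {𝕜 : Type*} [RCLike 𝕜]
    {G H : Matrix ι ι 𝕜} {a b : 𝕜}
    (hG : ∀ i, G i i = 1) (hH : ∀ i, H i i = 1) (hGa : ((1 + a) • 1 - G).PosSemidef)
    (hHb : (H - (1 - b) • 1).PosSemidef) : ((1 + a * b) • 1 - G ⊙ H).PosSemidef := by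
  convert hGa.hadamard hHb using 1
  ext i j
  rcases eq_or_ne i j with rfl | hij
  · simp [hG, hH]
  · simp [hij]

variable [Fintype ι] [DecidableEq ι]

theorem IsHermitian.posSemidef_smul_one_sub {M : Matrix ι ι ℝ} (hM : M.IsHermitian) {c : ℝ}
    (h : spectrum ℝ M ⊆ Set.Iic c) : (c • 1 - M).PosSemidef := by
  rw [← Algebra.algebraMap_eq_smul_one, posSemidef_iff_isHermitian_and_spectrum_nonneg,
    ← spectrum.singleton_sub_eq, Set.singleton_sub]
  refine ⟨(IsSelfAdjoint.algebraMap _ (.all c)).sub hM, ?_⟩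
  rintro _ ⟨x, hx, rfl⟩
  exact sub_nonneg.2 (Set.mem_Iic.1 (h hx))

theorem IsHermitian.posSemidef_sub_smul_one {M : Matrix ι ι ℝ} (hM : M.IsHermitian) {c : ℝ}
    (h : spectrum ℝ M ⊆ Set.Ici c) : (M - c • 1).PosSemidef := by
  rw [← Algebra.algebraMap_eq_smul_one, posSemidef_iff_isHermitian_and_spectrum_nonneg,
    ← spectrum.sub_singleton_eq, Set.sub_singleton]
  refine ⟨hM.sub (IsSelfAdjoint.algebraMap _ (.all c)), ?_⟩
  rintro _ ⟨x, hx, rfl⟩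
  exact sub_nonneg.2 (Set.mem_Ici.1 (h hx))

end Matrix

theorem khatriRao_transpose_mul_self {m : ℕ} {ι : Type*} (A B : Matrix (Fin m) ι ℝ) :
    (khatriRao A B)ᵀ * khatriRao A B = (Aᵀ * A) ⊙ (Bᵀ * B) := by
  ext i j
  simp only [mul_apply, hadamard_apply, transpose_apply, khatriRao, Finset.sum_mul_sum,
    Fintype.sum_prod_type]
  exact Finset.sum_congr rfl fun _ _ => Finset.sum_congr rfl fun _ _ => by ring

theorem gram_khatriRao_submatrix_le_general {m n : ℕ} (A B : Matrix (Fin m) (Fin n) ℝ)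
    (hAcol : ∀ j, ∑ i, (A i j) ^ 2 = 1) (hBcol : ∀ j, ∑ i, (B i j) ^ 2 = 1)
    (S : Finset (Fin n)) (δ : ℝ)
    (AS : Matrix (Fin m) {j // j ∈ S} ℝ)
    (hAS : AS = A.submatrix id (fun j : {j // j ∈ S} => (j : Fin n)))
    (BS : Matrix (Fin m) {j // j ∈ S} ℝ)
    (hBS : BS = B.submatrix id (fun j : {j // j ∈ S} => (j : Fin n)))
    (hGA : spectrum ℝ (ASᵀ * AS) ⊆ Set.Icc (1 - δ) (1 + δ))
    (hGB : spectrum ℝ (BSᵀ * BS) ⊆ Set.Icc (1 - δ) (1 + δ)) :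
    ((1 + δ ^ 2) • (1 : Matrix {j // j ∈ S} {j // j ∈ S} ℝ) -
      (khatriRao AS BS)ᵀ * khatriRao AS BS).PosSemidef := by
  have hAdiag : ∀ j, (ASᵀ * AS) j j = 1 := fun j => by
    rw [transpose_mul_self_apply_self, hAS]; exact hAcol j
  have hBdiag : ∀ j, (BSᵀ * BS) j j = 1 := fun j => by
    rw [transpose_mul_self_apply_self, hBS]; exact hBcol j
  have hAup := (isHermitian_transpose_mul_self AS).posSemidef_smul_one_sub
    (hGA.trans Set.Icc_subset_Iic_self)
  have hBlow := (isHermitian_transpose_mul_self BS).posSemidef_sub_smul_one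
    (hGB.trans Set.Icc_subset_Ici_self)
  rw [khatriRao_transpose_mul_self, sq]
  exact hAup.smul_one_sub_hadamard hAdiag hBdiag hBlow

/-- Upper Loewner bound for the Gram matrix of the Khatri-Rao product of column
submatrices: `(A_S ⊙ B_S)ᵀ(A_S ⊙ B_S) ≤ (1 + δ²) I`. -/
theorem gram_khatriRao_submatrix_le {m n k : ℕ} (A B : Matrix (Fin m) (Fin n) ℝ)
    (hAcol : ∀ j, ∑ i, (A i j) ^ 2 = 1) (hBcol : ∀ j, ∑ i, (B i j) ^ 2 = 1)
    (S : Finset (Fin n)) (hS : S.card = k) (hk : k ≤ m)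
    (δ : ℝ) (hδ : δ ∈ Set.Ioo (0 : ℝ) 1)
    (AS : Matrix (Fin m) {j // j ∈ S} ℝ)
    (hAS : AS = A.submatrix id (fun j : {j // j ∈ S} => (j : Fin n)))
    (BS : Matrix (Fin m) {j // j ∈ S} ℝ)
    (hBS : BS = B.submatrix id (fun j : {j // j ∈ S} => (j : Fin n)))
    (hGA : spectrum ℝ (ASᵀ * AS) ⊆ Set.Icc (1 - δ) (1 + δ))
    (hGB : spectrum ℝ (BSᵀ * BS) ⊆ Set.Icc (1 - δ) (1 + δ)) :
    ((1 + δ ^ 2) • (1 : Matrix {j // j ∈ S} {j // j ∈ S} ℝ) -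
      (khatriRao AS BS)ᵀ * khatriRao AS BS).PosSemidef :=
  gram_khatriRao_submatrix_le_general A B hAcol hBcol S δ AS hAS BS hBS hGA hGB
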